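/- arXiv:2604.28033 — 2 statements merged into one kernel-verified Lean document; each statement's English description precedes it below -/
import Mathlib

section
/- Let G be the graph θ_n^1(3,3)-type graph where a ≥ 1 leaves are attached to u and b ≥ 1 leaves to v with a + b = k = n − 4. Then G has exactly ab + 2a + 2b + 3 maximal matchings, of which exactly one has size 1 and all others size 2, so avm(G) = 2 − 1/(ab + 2k + 3). -/
open scoped Classical

/-- `M` is a matching of `G`, viewed as a finite set of edges. -/
def IsMatchingSet {V : Type*} (G : SimpleGraph V) (M : Finset (Sym2 V)) : Prop :=
  (M : Set (Sym2 V)) ⊆ G.edgeSet ∧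
    (M : Set (Sym2 V)).Pairwise fun e f => ∀ v : V, ¬(v ∈ e ∧ v ∈ f)

/-- `M` is a maximal matching of `G`. -/
def IsMaximalMatching {V : Type*} (G : SimpleGraph V) (M : Finset (Sym2 V)) : Prop :=
  IsMatchingSet G M ∧ ∀ N : Finset (Sym2 V), IsMatchingSet G N → M ⊆ N → N = M

/-- The finite set of all maximal matchings of a finite graph. -/
noncomputable def maximalMatchings {V : Type*} [Fintype V] [DecidableEq V]
    (G : SimpleGraph V) : Finset (Finset (Sym2 V)) :=
  G.edgeFinset.powerset.filter fun M => IsMaximalMatching G M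

/-- The average size of a maximal matching of `G`. -/
noncomputable def avm {V : Type*} [Fintype V] [DecidableEq V] (G : SimpleGraph V) : ℚ :=
  (∑ M ∈ maximalMatchings G, (M.card : ℚ)) / ((maximalMatchings G).card : ℚ)

/-- The θ-type graph on `n` vertices: core `0 = u`, `1 = v`, `2 = x`, `3 = y` with
edges `uv, ux, xv, uy, yv`; vertices `4, …, 3 + a` are leaves attached to `u`, and
vertices `4 + a, …, n - 1` are leaves attached to `v`. -/
def thetaSplit (n a : ℕ) : SimpleGraph (Fin n) :=
  SimpleGraph.fromRel fun x y =>
    ((x : ℕ) = 0 ∧ (y : ℕ) = 1) ∨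
    ((x : ℕ) = 0 ∧ (y : ℕ) = 2) ∨ ((x : ℕ) = 2 ∧ (y : ℕ) = 1) ∨
    ((x : ℕ) = 0 ∧ (y : ℕ) = 3) ∨ ((x : ℕ) = 3 ∧ (y : ℕ) = 1) ∨
    ((x : ℕ) = 0 ∧ 4 ≤ (y : ℕ) ∧ (y : ℕ) < 4 + a) ∨
    ((x : ℕ) = 1 ∧ 4 + a ≤ (y : ℕ))

/-!
Call `u, v, x, y` a theta core when `uvx` and `uvy` are triangles. In `thetaSplit` every edge meets
`u` or `v`, so a matching has at most one edge at each of them, and it is maximal exactly when it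
dominates every edge. The edges `ux`, `uy` can then only be dominated through `u` itself: the
single edge of the matching at `v` cannot contain both `x` and `y`. So `u`, and symmetrically `v`,
are matched, and the maximal matchings are `{uv}` together with the matchings `{uw, vz}` where
`w ≠ v` is a neighbour of `u`, `z ≠ u` a neighbour of `v` and `w ≠ z`. With `a + 2` choices for
`w`, `b + 2` for `z` and the two coincidences `w = z ∈ {x, y}`, there are `(a + 2)(b + 2) - 2`
matchings of size two.
-/

open Finset

theorem Finset.card_filter_ne_add_card_inter {α : Type*} [DecidableEq α] (A B : Finset α) :
    #((A ×ˢ B).filter fun p => p.1 ≠ p.2) + #(A ∩ B) = #A * #B := by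
  have hdiag : (A ×ˢ B).filter (fun p => p.1 = p.2) = (A ∩ B).image fun w => (w, w) := by
    ext ⟨w, z⟩
    simp only [mem_filter, mem_product, mem_image, mem_inter, Prod.mk.injEq]
    constructor
    · rintro ⟨⟨hw, hz⟩, rfl⟩
      exact ⟨w, ⟨hw, hz⟩, rfl, rfl⟩
    · rintro ⟨t, ⟨hA, hB⟩, rfl, rfl⟩
      exact ⟨⟨hA, hB⟩, rfl⟩
  rw [← card_product, ← card_filter_add_card_filter_not (s := A ×ˢ B) (fun p => p.1 = p.2), hdiag,
    card_image_of_injective _ fun w z h => (Prod.mk.inj h).1]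
  exact add_comm _ _

section Matching

variable {V : Type*} {G : SimpleGraph V} {M : Finset (Sym2 V)}

theorem IsMatchingSet.eq_of_mem_of_mem (hM : IsMatchingSet G M) {e f : Sym2 V} {w : V}
    (he : e ∈ M) (hf : f ∈ M) (hwe : w ∈ e) (hwf : w ∈ f) : e = f := by
  by_contra hne
  exact hM.2 he hf hne w ⟨hwe, hwf⟩

theorem isMaximalMatching_iff :
    IsMaximalMatching G M ↔ IsMatchingSet G M ∧ ∀ e ∈ G.edgeSet, ∃ f ∈ M, ∃ w, w ∈ e ∧ w ∈ f := by
  refine ⟨fun hM => ⟨hM.1, fun e he => ?_⟩, fun ⟨hM, hdom⟩ => ⟨hM, fun N hN hMN => ?_⟩⟩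
  · by_contra! hfree
    have hins : IsMatchingSet G (insert e M) := by
      refine ⟨?_, ?_⟩
      · rw [coe_insert]
        exact Set.insert_subset he hM.1.1
      · rw [coe_insert]
        refine Set.pairwise_insert.mpr ⟨hM.1.2, fun f hf _ => ⟨?_, ?_⟩⟩
        · exact fun w hw => hfree f hf w hw.1 hw.2
        · exact fun w hw => hfree f hf w hw.2 hw.1
    have heM : e ∈ M := by
      rw [← hM.2 _ hins (subset_insert e M)]
      exact mem_insert_self e M
    induction e using Sym2.ind with
    | _ x y => exact hfree _ heM x (Sym2.mem_mk_left x y) (Sym2.mem_mk_left x y)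
  · refine Subset.antisymm (fun f hf => ?_) hMN
    obtain ⟨g, hg, w, hwf, hwg⟩ := hdom f (hN.1 hf)
    exact hN.eq_of_mem_of_mem hf (hMN hg) hwf hwg ▸ hg

theorem mem_maximalMatchings [Fintype V] [DecidableEq V] :
    M ∈ maximalMatchings G ↔ IsMaximalMatching G M := by
  refine ⟨fun h => (mem_filter.mp h).2, fun h => mem_filter.mpr ⟨?_, h⟩⟩
  exact mem_powerset.mpr fun e he => G.mem_edgeFinset.mpr (h.1.1 he)

theorem avm_eq_two_sub_one_div_card [Fintype V] [DecidableEq V]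
    (h_one : #((maximalMatchings G).filter fun M => M.card = 1) = 1)
    (h_two : ∀ M ∈ maximalMatchings G, M.card ≠ 1 → M.card = 2) :
    avm G = 2 - 1 / #(maximalMatchings G) := by
  have hsum : ∑ M ∈ maximalMatchings G, (M.card : ℚ) = 2 * #(maximalMatchings G) - 1 := by
    rw [← sum_filter_add_sum_filter_not _ (fun M => M.card = 1),
      sum_congr rfl fun M hM => congrArg Nat.cast (mem_filter.mp hM).2,
      sum_congr rfl fun M hM => congrArg Nat.cast
        (h_two M (mem_filter.mp hM).1 (mem_filter.mp hM).2),
      ← card_filter_add_card_filter_not (fun M : Finset (Sym2 V) => M.card = 1)]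
    simp only [sum_const, nsmul_eq_mul, h_one]
    push_cast
    ring
  have hpos : (0 : ℚ) < #(maximalMatchings G) := by
    have := card_le_card (filter_subset (fun M : Finset (Sym2 V) => M.card = 1) (maximalMatchings G))
    exact_mod_cast (by omega : 0 < #(maximalMatchings G))
  rw [avm, hsum]
  field_simp

theorem isMaximalMatching_of_mem_of_mem {u v : V} {e f : Sym2 V}
    (hcover : ∀ g ∈ G.edgeSet, u ∈ g ∨ v ∈ g) (hM : IsMatchingSet G M) (he : e ∈ M) (hf : f ∈ M)
    (hue : u ∈ e) (hvf : v ∈ f) : IsMaximalMatching G M := by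
  refine isMaximalMatching_iff.mpr ⟨hM, fun g hg => ?_⟩
  rcases hcover g hg with hug | hvg
  · exact ⟨e, he, u, hug, hue⟩
  · exact ⟨f, hf, v, hvg, hvf⟩

theorem isMatchingSet_pair [DecidableEq V] {u v w z : V} (huw : G.Adj u w) (hvz : G.Adj v z)
    (huv : u ≠ v) (huz : u ≠ z) (hwv : w ≠ v) (hwz : w ≠ z) :
    IsMatchingSet G {s(u, w), s(v, z)} := by
  refine ⟨?_, ?_⟩
  · simp only [coe_insert, coe_singleton, Set.insert_subset_iff, Set.singleton_subset_iff,
      SimpleGraph.mem_edgeSet]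
    exact ⟨huw, hvz⟩
  · rw [coe_insert, coe_singleton, Set.pairwise_insert]
    simp only [Set.pairwise_singleton, Set.mem_singleton_iff, true_and, forall_eq, Sym2.mem_iff]
    grind

theorem card_pair_sym2 [DecidableEq V] {u v w z : V} (huv : u ≠ v) (huz : u ≠ z) :
    #{s(u, w), s(v, z)} = 2 :=
  card_pair fun h => (Sym2.eq_iff.mp h).elim (fun h' => huv h'.1) fun h' => huz h'.1

structure IsThetaCore (G : SimpleGraph V) (u v x y : V) : Prop where
  adj_uv : G.Adj u v
  adj_ux : G.Adj u x
  adj_xv : G.Adj x v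
  adj_uy : G.Adj u y
  adj_yv : G.Adj y v
  x_ne_y : x ≠ y

section ThetaCore

variable {u v x y : V}

theorem IsThetaCore.symm (hG : IsThetaCore G u v x y) : IsThetaCore G v u x y :=
  ⟨hG.adj_uv.symm, hG.adj_xv.symm, hG.adj_ux.symm, hG.adj_yv.symm, hG.adj_uy.symm, hG.x_ne_y⟩

theorem IsMaximalMatching.exists_mem_of_isThetaCore (hcover : ∀ e ∈ G.edgeSet, u ∈ e ∨ v ∈ e)
    (hG : IsThetaCore G u v x y) (hM : IsMaximalMatching G M) : ∃ e ∈ M, u ∈ e := by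
  by_contra! hu
  obtain ⟨hmatch, hdom⟩ := isMaximalMatching_iff.mp hM
  have hdom_at_v : ∀ w, G.Adj u w → ∃ f ∈ M, v ∈ f ∧ w ∈ f := by
    intro w hw
    obtain ⟨f, hf, t, ht, htf⟩ := hdom s(u, w) hw
    rcases Sym2.mem_iff.mp ht with rfl | rfl
    · exact absurd htf (hu f hf)
    · exact ⟨f, hf, (hcover f (hmatch.1 hf)).resolve_left (hu f hf), htf⟩
  obtain ⟨f, hf, hvf, hxf⟩ := hdom_at_v x hG.adj_ux
  obtain ⟨g, hg, hvg, hyg⟩ := hdom_at_v y hG.adj_uy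
  obtain rfl := hmatch.eq_of_mem_of_mem hf hg hvf hvg
  rw [(Sym2.mem_and_mem_iff hG.adj_xv.ne.symm).mp ⟨hvf, hxf⟩, Sym2.mem_iff] at hyg
  rcases hyg with rfl | rfl
  · exact hG.adj_yv.ne rfl
  · exact hG.x_ne_y rfl

theorem isMaximalMatching_iff_of_isThetaCore [DecidableEq V]
    (hcover : ∀ e ∈ G.edgeSet, u ∈ e ∨ v ∈ e) (hG : IsThetaCore G u v x y) :
    IsMaximalMatching G M ↔ M = {s(u, v)} ∨
      ∃ w z, (((G.Adj u w ∧ w ≠ v) ∧ G.Adj v z ∧ z ≠ u) ∧ w ≠ z) ∧ {s(u, w), s(v, z)} = M := by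
  have huv := hG.adj_uv.ne
  constructor
  · intro hM
    have hmatch := hM.1
    obtain ⟨e, he, hue⟩ := hM.exists_mem_of_isThetaCore hcover hG
    obtain ⟨f, hf, hvf⟩ := hM.exists_mem_of_isThetaCore (fun e he => (hcover e he).symm) hG.symm
    have hM_sub : M ⊆ {e, f} := by
      intro g hg
      rcases hcover g (hmatch.1 hg) with hug | hvg
      · simp [hmatch.eq_of_mem_of_mem hg he hug hue]
      · simp [hmatch.eq_of_mem_of_mem hg hf hvg hvf]
    by_cases hef : e = f
    · subst hef
      left
      rw [← (Sym2.mem_and_mem_iff huv).mp ⟨hue, hvf⟩]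
      exact eq_singleton_iff_unique_mem.mpr ⟨he, fun g hg => by simpa using hM_sub hg⟩
    · right
      obtain ⟨w, rfl⟩ := Sym2.mem_iff_exists.mp hue
      obtain ⟨z, rfl⟩ := Sym2.mem_iff_exists.mp hvf
      have hne : ∀ t, t ∈ s(u, w) → t ∉ s(v, z) := fun t ht htf =>
        hef (hmatch.eq_of_mem_of_mem he hf ht htf)
      refine ⟨w, z, ⟨⟨⟨hmatch.1 he, ?_⟩, hmatch.1 hf, ?_⟩, ?_⟩, ?_⟩
      · exact fun h => hne v (h ▸ Sym2.mem_mk_right u w) (Sym2.mem_mk_left v z)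
      · exact fun h => hne u (Sym2.mem_mk_left u w) (h ▸ Sym2.mem_mk_right v z)
      · exact fun h => hne w (Sym2.mem_mk_right u w) (h ▸ Sym2.mem_mk_right v z)
      · exact Subset.antisymm (insert_subset he (by simpa using hf)) hM_sub
  · rintro (rfl | ⟨w, z, ⟨⟨⟨huw, hwv⟩, hvz, hzu⟩, hwz⟩, rfl⟩)
    · refine isMaximalMatching_of_mem_of_mem hcover ⟨?_, ?_⟩ (mem_singleton_self _)
        (mem_singleton_self _) (Sym2.mem_mk_left u v) (Sym2.mem_mk_right u v)
      · simpa using hG.adj_uv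
      · simp
    · exact isMaximalMatching_of_mem_of_mem hcover (isMatchingSet_pair huw hvz huv hzu.symm hwv hwz)
        (by simp) (by simp) (Sym2.mem_mk_left u w) (Sym2.mem_mk_left v z)

variable [Fintype V] [DecidableEq V]

theorem filter_card_eq_one_maximalMatchings_of_isThetaCore
    (hcover : ∀ e ∈ G.edgeSet, u ∈ e ∨ v ∈ e) (hG : IsThetaCore G u v x y) :
    (maximalMatchings G).filter (fun M => M.card = 1) = {{s(u, v)}} := by
  ext M
  rw [mem_filter, mem_maximalMatchings, isMaximalMatching_iff_of_isThetaCore hcover hG,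
    mem_singleton]
  constructor
  · rintro ⟨hM | ⟨w, z, ⟨⟨_, _, hzu⟩, _⟩, rfl⟩, hcard⟩
    · exact hM
    · rw [card_pair_sym2 hG.adj_uv.ne hzu.symm] at hcard
      omega
  · rintro rfl
    exact ⟨Or.inl rfl, card_singleton _⟩

theorem card_eq_two_of_mem_maximalMatchings_of_isThetaCore
    (hcover : ∀ e ∈ G.edgeSet, u ∈ e ∨ v ∈ e) (hG : IsThetaCore G u v x y)
    (hM : M ∈ maximalMatchings G) (hcard : M.card ≠ 1) : M.card = 2 := by
  rw [mem_maximalMatchings, isMaximalMatching_iff_of_isThetaCore hcover hG] at hM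
  rcases hM with rfl | ⟨w, z, ⟨⟨_, _, hzu⟩, _⟩, rfl⟩
  · exact absurd (card_singleton _) hcard
  · exact card_pair_sym2 hG.adj_uv.ne hzu.symm

def pairMatching (u v : V) (p : V × V) : Finset (Sym2 V) := {s(u, p.1), s(v, p.2)}

theorem card_maximalMatchings_add_card_inter_of_isThetaCore
    (hcover : ∀ e ∈ G.edgeSet, u ∈ e ∨ v ∈ e) (hG : IsThetaCore G u v x y) {A B : Finset V}
    (hA : ∀ w, w ∈ A ↔ G.Adj u w ∧ w ≠ v) (hB : ∀ z, z ∈ B ↔ G.Adj v z ∧ z ≠ u) :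
    #(maximalMatchings G) + #(A ∩ B) = #A * #B + 1 := by
  have hcount := card_filter_ne_add_card_inter A B
  set P := (A ×ˢ B).filter fun p => p.1 ≠ p.2
  have hmm : maximalMatchings G = insert {s(u, v)} (P.image (pairMatching u v)) := by
    ext M
    simp only [mem_maximalMatchings, isMaximalMatching_iff_of_isThetaCore hcover hG, mem_insert,
      mem_image, mem_filter, mem_product, hA, hB, P, Prod.exists, pairMatching]
  have huv := hG.adj_uv.ne
  have hP : ∀ p ∈ P, p.2 ≠ u := fun p hp => ((hB _).mp (mem_product.mp (mem_filter.mp hp).1).2).2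
  have hinj : Set.InjOn (pairMatching u v) P := by
    rintro ⟨w, z⟩ hp ⟨w', z'⟩ hp' h
    have hz := hP _ hp
    have hz' := hP _ hp'
    dsimp only [pairMatching] at h hz hz'
    have h₁ : s(u, w) ∈ ({s(u, w'), s(v, z')} : Finset (Sym2 V)) := h ▸ mem_insert_self _ _
    have h₂ : s(v, z) ∈ ({s(u, w'), s(v, z')} : Finset (Sym2 V)) := h ▸ by simp
    simp only [mem_insert, mem_singleton, Sym2.eq_iff] at h₁ h₂
    grind
  have hnotMem : {s(u, v)} ∉ P.image (pairMatching u v) := by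
    simp only [mem_image, not_exists, not_and]
    intro p hp h
    have := card_pair_sym2 (w := p.1) huv (hP p hp).symm
    rw [← pairMatching, h, card_singleton] at this
    omega
  rw [hmm, card_insert_of_notMem hnotMem, card_image_of_injOn hinj]
  omega

end ThetaCore

end Matching

section ThetaSplit

variable {n a : ℕ}

theorem thetaSplit_mem_or_mem (h : 2 ≤ n) :
    ∀ e ∈ (thetaSplit n a).edgeSet, (⟨0, by omega⟩ : Fin n) ∈ e ∨ (⟨1, by omega⟩ : Fin n) ∈ e := by
  intro e he
  induction e using Sym2.ind with
  | _ i j =>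
    simp only [SimpleGraph.mem_edgeSet, thetaSplit, SimpleGraph.fromRel_adj] at he
    simp only [Sym2.mem_iff, Fin.ext_iff]
    omega

theorem thetaSplit_isThetaCore (h : 4 ≤ n) :
    IsThetaCore (thetaSplit n a) ⟨0, by omega⟩ ⟨1, by omega⟩ ⟨2, by omega⟩ ⟨3, by omega⟩ := by
  constructor <;> simp [thetaSplit, Fin.ext_iff]

theorem card_maximalMatchings_thetaSplit {b : ℕ} (hn : n = a + b + 4) :
    #(maximalMatchings (thetaSplit n a)) = a * b + 2 * a + 2 * b + 3 := by
  subst hn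
  let A : Finset (Fin (a + b + 4)) := (Ico 2 (4 + a)).attachFin fun m hm => by rw [mem_Ico] at hm; omega
  let B : Finset (Fin (a + b + 4)) := (Ico 2 4 ∪ Ico (4 + a) (a + b + 4)).attachFin fun m hm => by
    rw [mem_union, mem_Ico, mem_Ico] at hm; omega
  have hA : ∀ w, w ∈ A ↔ (thetaSplit _ a).Adj ⟨0, by omega⟩ w ∧ w ≠ ⟨1, by omega⟩ := by
    intro w
    simp only [A, mem_attachFin, mem_Ico, thetaSplit, SimpleGraph.fromRel_adj, ne_eq, Fin.ext_iff,
      true_and]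
    omega
  have hB : ∀ z, z ∈ B ↔ (thetaSplit _ a).Adj ⟨1, by omega⟩ z ∧ z ≠ ⟨0, by omega⟩ := by
    intro z
    have := z.isLt
    simp only [B, mem_attachFin, mem_union, mem_Ico, thetaSplit, SimpleGraph.fromRel_adj, ne_eq,
      Fin.ext_iff, true_and, and_true]
    omega
  have hAB : A ∩ B = (Ico 2 4).attachFin (n := a + b + 4) fun m hm => by rw [mem_Ico] at hm; omega := by
    ext w
    simp only [A, B, mem_inter, mem_attachFin, mem_union, mem_Ico]
    omega
  have hdisj : Disjoint (Ico 2 4) (Ico (4 + a) (a + b + 4)) :=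
    disjoint_left.mpr fun m hm hm' => by rw [mem_Ico] at hm hm'; omega
  have key := card_maximalMatchings_add_card_inter_of_isThetaCore (thetaSplit_mem_or_mem (by omega))
    (thetaSplit_isThetaCore (by omega)) hA hB
  simp only [hAB, A, B, card_attachFin, card_union_of_disjoint hdisj, Nat.card_Ico] at key
  rw [show 4 + a - 2 = a + 2 by omega, show a + b + 4 - (4 + a) = b by omega] at key
  linarith

end ThetaSplit

theorem stmt2_general (n a b : ℕ) (hab : a + b = n - 4)
    (hn : 5 ≤ n) :
    (maximalMatchings (thetaSplit n a)).card = a * b + 2 * a + 2 * b + 3 ∧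
    ((maximalMatchings (thetaSplit n a)).filter fun M => M.card = 1).card = 1 ∧
    (∀ M ∈ maximalMatchings (thetaSplit n a), M.card ≠ 1 → M.card = 2) ∧
    avm (thetaSplit n a) = 2 - 1 / ((a : ℚ) * b + 2 * (a + b) + 3) := by
  have hcover := thetaSplit_mem_or_mem (a := a) (by omega : 2 ≤ n)
  have hG := thetaSplit_isThetaCore (a := a) (by omega : 4 ≤ n)
  have hcard := card_maximalMatchings_thetaSplit (by omega : n = a + b + 4)
  have h_one : #((maximalMatchings (thetaSplit n a)).filter fun M => M.card = 1) = 1 := by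
    rw [filter_card_eq_one_maximalMatchings_of_isThetaCore hcover hG, card_singleton]
  have h_two := fun M => card_eq_two_of_mem_maximalMatchings_of_isThetaCore (M := M) hcover hG
  refine ⟨hcard, h_one, h_two, ?_⟩
  rw [avm_eq_two_sub_one_div_card h_one h_two, hcard]
  push_cast
  ring

theorem stmt2 (n a b : ℕ) (ha : 1 ≤ a) (hb : 1 ≤ b) (hab : a + b = n - 4)
    (hn : 5 ≤ n) :
    (maximalMatchings (thetaSplit n a)).card = a * b + 2 * a + 2 * b + 3 ∧
    ((maximalMatchings (thetaSplit n a)).filter fun M => M.card = 1).card = 1 ∧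
    (∀ M ∈ maximalMatchings (thetaSplit n a), M.card ≠ 1 → M.card = 2) ∧
    avm (thetaSplit n a) = 2 - 1 / ((a : ℚ) * b + 2 * (a + b) + 3) :=
  stmt2_general n a b hab hn
end

section
/- In any connected bicyclic graph G whose cycles C_p and C_q (with p ≥ 6 and q = 3) share exactly one vertex, there is no maximal matching of size 2, and consequently avm(G) ≥ 3. -/
open scoped Classical

/-! The vertices covered by a maximal matching form a vertex cover, and a vertex covers at most
two edges of a cycle. If a maximal matching had at most two edges, its at most four covered
vertices would have to be three on the `p`-cycle (so `p = 6` and no edge of that cycle joins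
two of them) and one on the triangle off the `p`-cycle. The matching edge avoiding this last
vertex then joins two vertices of the `p`-cycle without being one of its edges, i.e. it is a
chord; but two cycles sharing one vertex plus a chord already force `|E| ≥ |V| + 2`. -/

open Finset

namespace SimpleGraph.Walk

variable {V : Type*} [DecidableEq V] {G : SimpleGraph V} {u : V} {c : G.Walk u u}

lemma IsCycle.card_support_toFinset (hc : c.IsCycle) : #c.support.toFinset = c.length := by
  have hu : u ∈ c.support.tail := end_mem_tail_support hc.not_nil
  rw [← cons_tail_support, List.toFinset_cons, insert_eq_of_mem (List.mem_toFinset.mpr hu),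
    List.toFinset_card_of_nodup hc.support_nodup, List.length_tail, length_support]
  rfl

lemma IsCycle.card_edges_toFinset (hc : c.IsCycle) : #c.edges.toFinset = c.length := by
  rw [List.toFinset_card_of_nodup hc.edges_nodup, length_edges]

lemma IsCycle.card_filter_mem_edges_le_two (hc : c.IsCycle) (v : V) :
    #(c.edges.toFinset.filter (v ∈ ·)) ≤ 2 := by
  have hsub : (↑(c.edges.toFinset.filter (v ∈ ·)) : Set (Sym2 V)) ⊆
      (fun w => s(v, w)) '' c.toSubgraph.neighborSet v := by
    intro e he
    simp only [coe_filter, List.mem_toFinset, Set.mem_ofPred_eq] at he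
    refine ⟨Sym2.Mem.other he.2, ?_, Sym2.other_spec he.2⟩
    rw [Subgraph.mem_neighborSet, ← Subgraph.mem_edgeSet, Sym2.other_spec he.2,
      mem_edges_toSubgraph]
    exact he.1
  by_cases hv : v ∈ c.support
  · rw [← hc.ncard_neighborSet_toSubgraph_eq_two hv, ← Set.ncard_coe_finset]
    exact (Set.ncard_le_ncard hsub ((c.finite_neighborSet_toSubgraph).image _)).trans
      (Set.ncard_image_le c.finite_neighborSet_toSubgraph)
  · rw [card_eq_zero.mpr (filter_eq_empty_iff.mpr fun e he hve =>
      hv (mem_support_of_mem_edges (List.mem_toFinset.mp he) hve))]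
    omega

lemma IsCycle.sum_card_filter_mem_le (hc : c.IsCycle) (T : Finset V) :
    ∑ e ∈ c.edges.toFinset, #(T.filter (· ∈ e)) ≤ 2 * #T := by
  calc ∑ e ∈ c.edges.toFinset, #(T.filter (· ∈ e))
      = ∑ v ∈ T, #(c.edges.toFinset.filter (v ∈ ·)) := by
        simp only [card_filter]; exact sum_comm
    _ ≤ ∑ _v ∈ T, 2 := sum_le_sum fun v _ => hc.card_filter_mem_edges_le_two v
    _ = 2 * #T := by rw [sum_const, smul_eq_mul, mul_comm]

lemma IsCycle.length_le_two_mul_card (hc : c.IsCycle) {T : Finset V}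
    (hT : ∀ e ∈ c.edges, ∃ v ∈ T, v ∈ e) : c.length ≤ 2 * #T := by
  refine le_trans ?_ (hc.sum_card_filter_mem_le T)
  rw [← hc.card_edges_toFinset, card_eq_sum_ones]
  refine sum_le_sum fun e he => ?_
  obtain ⟨v, hv, hve⟩ := hT e (List.mem_toFinset.mp he)
  exact card_pos.mpr ⟨v, mem_filter.mpr ⟨hv, hve⟩⟩

lemma IsCycle.length_lt_two_mul_card (hc : c.IsCycle) {T : Finset V}
    (hT : ∀ e ∈ c.edges, ∃ v ∈ T, v ∈ e) {a b : V} (hab : a ≠ b) (ha : a ∈ T) (hb : b ∈ T)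
    (he : s(a, b) ∈ c.edges) : c.length < 2 * #T := by
  refine lt_of_lt_of_le ?_ (hc.sum_card_filter_mem_le T)
  rw [← hc.card_edges_toFinset, card_eq_sum_ones]
  refine sum_lt_sum (fun e he => ?_) ⟨s(a, b), List.mem_toFinset.mpr he, ?_⟩
  · obtain ⟨v, hv, hve⟩ := hT e (List.mem_toFinset.mp he)
    exact card_pos.mpr ⟨v, mem_filter.mpr ⟨hv, hve⟩⟩
  · exact one_lt_card.mpr ⟨a, by simp [ha], b, by simp [hb], hab⟩

lemma notMem_edges_of_card_inter_support_le_one {v w v' w' : V} {p : G.Walk v w}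
    {q : G.Walk v' w'} (h : #(p.support.toFinset ∩ q.support.toFinset) ≤ 1) {a b : V}
    (hab : a ≠ b) (ha : a ∈ p.support) (hb : b ∈ p.support) : s(a, b) ∉ q.edges := fun he =>
  hab <| card_le_one.mp h a (by simp [ha, q.fst_mem_support_of_mem_edges he])
    b (by simp [hb, q.snd_mem_support_of_mem_edges he])

end SimpleGraph.Walk

namespace SimpleGraph

variable {V : Type*} [Fintype V] [DecidableEq V] {G : SimpleGraph V}

-- Growing `W` along a walk to a missing vertex: every vertex added brings an edge not yet in `A`.
lemma Connected.card_add_card_le_card_edgeFinset_add_card (hconn : G.Connected)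
    {W : Finset V} (hW : W.Nonempty) {A : Finset (Sym2 V)} (hA : A ⊆ G.edgeFinset)
    (hAW : ∀ e ∈ A, ∀ v ∈ e, v ∈ W) :
    #A + Fintype.card V ≤ #G.edgeFinset + #W := by
  obtain ⟨n, hn⟩ : ∃ n, #Wᶜ = n := ⟨_, rfl⟩
  induction n generalizing W A with
  | zero =>
    rw [card_eq_zero, compl_eq_empty_iff] at hn
    subst hn
    simpa using card_le_card hA
  | succ n ih =>
    obtain ⟨y, hy⟩ := card_pos.mp (by omega : 0 < #Wᶜ)
    obtain ⟨x, hx⟩ := hW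
    obtain ⟨⟨⟨a, b⟩, hab⟩, -, ha, hb⟩ := (hconn.preconnected x y).some.exists_boundary_dart
      W hx (by simpa using hy)
    replace hb : b ∉ W := hb
    have habA : s(a, b) ∉ A := fun h => hb (hAW _ h _ (Sym2.mem_mk_right a b))
    have := ih (W := insert b W) (A := insert s(a, b) A) (insert_nonempty _ _)
      (insert_subset (mem_edgeFinset.mpr hab) hA) ?_ ?_
    · rw [card_insert_of_notMem habA, card_insert_of_notMem hb] at this
      omega
    · intro e he v hv
      rcases mem_insert.mp he with rfl | he
      · rcases Sym2.mem_iff.mp hv with rfl | rfl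
        exacts [mem_insert_of_mem ha, mem_insert_self _ _]
      · exact mem_insert_of_mem (hAW e he v hv)
    · rw [compl_insert, card_erase_of_mem (mem_compl.mpr hb), hn]
      rfl

open Walk in
lemma Connected.card_add_two_le_of_chord (hconn : G.Connected) {u₁ u₂ : V}
    {c₁ : G.Walk u₁ u₁} {c₂ : G.Walk u₂ u₂} (hc₁ : c₁.IsCycle) (hc₂ : c₂.IsCycle)
    (hshare : #(c₁.support.toFinset ∩ c₂.support.toFinset) = 1) {a b : V} (hab : G.Adj a b)
    (ha : a ∈ c₁.support) (hb : b ∈ c₁.support) (hchord : s(a, b) ∉ c₁.edges) :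
    Fintype.card V + 2 ≤ #G.edgeFinset := by
  have hE : Disjoint c₁.edges.toFinset c₂.edges.toFinset := by
    refine Finset.disjoint_left.mpr ?_
    rintro ⟨x, y⟩ he₁ he₂
    rw [List.mem_toFinset] at he₁ he₂
    exact notMem_edges_of_card_inter_support_le_one hshare.le
      (c₁.edges_subset_edgeSet he₁).ne (c₁.fst_mem_support_of_mem_edges he₁)
      (c₁.snd_mem_support_of_mem_edges he₁) he₂
  have hab₂ : s(a, b) ∉ c₂.edges :=
    notMem_edges_of_card_inter_support_le_one hshare.le hab.ne ha hb
  have hcount := hconn.card_add_card_le_card_edgeFinset_add_card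
    (W := c₁.support.toFinset ∪ c₂.support.toFinset)
    (A := insert s(a, b) (c₁.edges.toFinset ∪ c₂.edges.toFinset)) ⟨u₁, by simp⟩ ?_ ?_
  · have hW := card_union_add_card_inter c₁.support.toFinset c₂.support.toFinset
    rw [card_insert_of_notMem (by simp [hchord, hab₂]), card_union_of_disjoint hE,
      hc₁.card_edges_toFinset, hc₂.card_edges_toFinset] at hcount
    rw [hshare, hc₁.card_support_toFinset, hc₂.card_support_toFinset] at hW
    omega
  · refine insert_subset (mem_edgeFinset.mpr hab) (union_subset ?_ ?_) <;>
      exact fun e he => mem_edgeFinset.mpr (edges_subset_edgeSet _ (List.mem_toFinset.mp he))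
  · simp only [mem_insert, mem_union, List.mem_toFinset]
    rintro e (rfl | he | he) v hv
    · rcases Sym2.mem_iff.mp hv with rfl | rfl <;> simp [ha, hb]
    · simp [mem_support_of_mem_edges he hv]
    · simp [mem_support_of_mem_edges he hv]

end SimpleGraph

section Matching

variable {V : Type*} {G : SimpleGraph V} {M : Finset (Sym2 V)}

lemma IsMatchingSet.exists_forall_notMem (hM : IsMatchingSet G M) (hM2 : 2 ≤ #M)
    {X : Finset V} (hX : #X ≤ 1) : ∃ g ∈ M, ∀ v ∈ g, v ∉ X := by
  obtain ⟨f, hf, g, hg, hfg⟩ := one_lt_card.mp hM2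
  by_cases! hfX : ∀ v ∈ f, v ∉ X
  · exact ⟨f, hf, hfX⟩
  obtain ⟨x, hxf, hxX⟩ := hfX
  exact ⟨g, hg, fun v hv hvX => hM.2 hf hg hfg x ⟨hxf, card_le_one.mp hX v hvX x hxX ▸ hv⟩⟩

lemma exists_isMaximalMatching [Fintype V] (G : SimpleGraph V) :
    ∃ M, IsMaximalMatching G M := by
  obtain ⟨M, hM⟩ := (G.edgeFinset.powerset.filter (IsMatchingSet G)).exists_maximal
    ⟨∅, by simp [IsMatchingSet]⟩
  simp only [mem_filter, mem_powerset] at hM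
  refine ⟨M, hM.1.2, fun N hN hMN => le_antisymm ?_ hMN⟩
  exact hM.2 ⟨fun e he => SimpleGraph.mem_edgeFinset.mpr (hN.1 he), hN⟩ hMN

variable [DecidableEq V]

def matchedVerts (M : Finset (Sym2 V)) : Finset V := M.biUnion Sym2.toFinset

lemma mem_matchedVerts {v : V} : v ∈ matchedVerts M ↔ ∃ e ∈ M, v ∈ e := by
  simp [matchedVerts]

lemma card_matchedVerts_le : #(matchedVerts M) ≤ 2 * #M := by
  refine card_biUnion_le.trans ?_
  calc ∑ e ∈ M, #e.toFinset ≤ ∑ _e ∈ M, 2 :=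
        sum_le_sum fun e _ => by rw [Sym2.card_toFinset]; split_ifs <;> omega
    _ = 2 * #M := by rw [sum_const, smul_eq_mul, mul_comm]

lemma IsMaximalMatching.exists_mem_matchedVerts (hM : IsMaximalMatching G M) {e : Sym2 V}
    (he : e ∈ G.edgeSet) : ∃ v ∈ e, v ∈ matchedVerts M := by
  by_contra! hfree
  have hN : IsMatchingSet G (insert e M) := by
    refine ⟨by simpa [Set.insert_subset_iff] using ⟨he, hM.1.1⟩, ?_⟩
    rw [coe_insert, Set.pairwise_insert]
    refine ⟨hM.1.2, fun f hf _ => ⟨fun v hv => ?_, fun v hv => ?_⟩⟩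
    · exact hfree v hv.1 (mem_matchedVerts.mpr ⟨f, hf, hv.2⟩)
    · exact hfree v hv.2 (mem_matchedVerts.mpr ⟨f, hf, hv.1⟩)
  have heM : e ∈ M := hM.2 _ hN (subset_insert _ _) ▸ mem_insert_self e M
  exact hfree _ (Sym2.out_fst_mem e) (mem_matchedVerts.mpr ⟨e, heM, Sym2.out_fst_mem e⟩)

lemma le_avm [Fintype V] {k : ℕ} (hk : ∀ M, IsMaximalMatching G M → k ≤ #M) :
    (k : ℚ) ≤ avm G := by
  obtain ⟨M₀, hM₀⟩ := exists_isMaximalMatching G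
  have hmem : ∀ {M}, M ∈ maximalMatchings G ↔ IsMaximalMatching G M := fun {M} => by
    simp only [maximalMatchings, mem_filter, mem_powerset, and_iff_right_iff_imp]
    exact fun hM e he => SimpleGraph.mem_edgeFinset.mpr (hM.1.1 he)
  rw [avm, le_div_iff₀ (by exact_mod_cast card_pos.mpr ⟨M₀, hmem.mpr hM₀⟩)]
  calc (k : ℚ) * #(maximalMatchings G) = ∑ _M ∈ maximalMatchings G, (k : ℚ) := by
        rw [sum_const, nsmul_eq_mul, mul_comm]
    _ ≤ ∑ M ∈ maximalMatchings G, (#M : ℚ) :=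
        sum_le_sum fun M hM => by exact_mod_cast hk M (hmem.mp hM)

end Matching

open SimpleGraph

theorem three_le_card_of_isMaximalMatching {V : Type*} [Fintype V] [DecidableEq V]
    {G : SimpleGraph V} (hconn : G.Connected) (hsize : #G.edgeFinset = Fintype.card V + 1)
    {u₁ u₂ : V} {c₁ : G.Walk u₁ u₁} {c₂ : G.Walk u₂ u₂} (hc₁ : c₁.IsCycle) (hc₂ : c₂.IsCycle)
    (hp : 6 ≤ c₁.length) (hq : c₂.length = 3)
    (hshare : #(c₁.support.toFinset ∩ c₂.support.toFinset) = 1)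
    {M : Finset (Sym2 V)} (hM : IsMaximalMatching G M) : 3 ≤ #M := by
  by_contra! hM3
  set S := matchedVerts M
  have hcover {w : V} (c : G.Walk w w) :
      ∀ e ∈ c.edges, ∃ v ∈ S.filter (· ∈ c.support), v ∈ e := by
    intro e he
    obtain ⟨v, hve, hvS⟩ := hM.exists_mem_matchedVerts (c.edges_subset_edgeSet he)
    exact ⟨v, mem_filter.mpr ⟨hvS, c.mem_support_of_mem_edges he hve⟩, hve⟩
  set T₁ := S.filter (· ∈ c₁.support)
  set T₂ := S.filter (· ∈ c₂.support)
  have h₁ : c₁.length ≤ 2 * #T₁ := hc₁.length_le_two_mul_card (hcover c₁)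
  have h₂ : c₂.length ≤ 2 * #T₂ := hc₂.length_le_two_mul_card (hcover c₂)
  have hS : #S ≤ 2 * #M := card_matchedVerts_le
  have h₁₂ : #(T₁ ∩ T₂) ≤ 1 :=
    (card_le_card fun v hv => by simp_all [T₁, T₂]).trans hshare.le
  have hT₁S : T₁ ⊆ S := filter_subset _ _
  have hT₂ : #(T₂ \ T₁) ≤ #(S \ T₁) :=
    card_le_card (sdiff_subset_sdiff (filter_subset _ _) subset_rfl)
  rw [card_sdiff, card_sdiff_of_subset hT₁S] at hT₂
  obtain ⟨⟨a, b⟩, hg, hgT₁⟩ := hM.1.exists_forall_notMem (X := S \ T₁) (by omega)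
    (by rw [card_sdiff_of_subset hT₁S]; omega)
  have hab : G.Adj a b := hM.1.1 hg
  have hT₁ : ∀ v ∈ s(a, b), v ∈ T₁ := fun v hv => by
    by_contra hvT₁
    exact hgT₁ v hv (mem_sdiff.mpr ⟨mem_matchedVerts.mpr ⟨_, hg, hv⟩, hvT₁⟩)
  have ha := hT₁ a (Sym2.mem_mk_left a b)
  have hb := hT₁ b (Sym2.mem_mk_right a b)
  have hchord : s(a, b) ∉ c₁.edges := fun he =>
    (hc₁.length_lt_two_mul_card (T := T₁) (hcover c₁) hab.ne ha hb he).not_ge (by omega)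
  have := hconn.card_add_two_le_of_chord hc₁ hc₂ hshare hab (mem_filter.mp ha).2
    (mem_filter.mp hb).2 hchord
  omega

theorem stmt9 {V : Type*} [Fintype V] [DecidableEq V] (G : SimpleGraph V)
    (hconn : G.Connected) (hsize : G.edgeFinset.card = Fintype.card V + 1)
    (u₁ u₂ : V) (c₁ : G.Walk u₁ u₁) (c₂ : G.Walk u₂ u₂)
    (hc₁ : c₁.IsCycle) (hc₂ : c₂.IsCycle)
    (hp : 6 ≤ c₁.length) (hq : c₂.length = 3)
    (hshare : (c₁.support.toFinset ∩ c₂.support.toFinset).card = 1) :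
    (¬ ∃ M : Finset (Sym2 V), IsMaximalMatching G M ∧ M.card = 2) ∧
    3 ≤ avm G := by
  have key {M : Finset (Sym2 V)} (hM : IsMaximalMatching G M) : 3 ≤ #M :=
    three_le_card_of_isMaximalMatching hconn hsize hc₁ hc₂ hp hq hshare hM
  refine ⟨fun ⟨M, hM, hM2⟩ => by have := key hM; omega, ?_⟩
  exact_mod_cast le_avm fun M hM => key hM
end
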